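/- arXiv:1505.03697 — 3 statements merged into one kernel-verified Lean document; each statement's English description precedes it below -/
import Mathlib

section
/- Let k ≥ 3, i ∈ {2, ..., k-1}, and T = [k] \ {i}, regarded as a tile in ℤ/kℤ. For 1 ≤ j ≤ d, let c_{j,d} ∈ (ℤ/kℤ)^d be the point with j-th coordinate equal to k-1 and all other coordinates 0, and let C_d = {c_{j,d} : 1 ≤ j ≤ d}. If S ⊂ C_d satisfies |S| ≡ 1 (mod k-1) and |S| ≤ d - log_k(d), then (ℤ/kℤ)^d \ S is T-tilable. -/
/-!
A copy of `T = ℤ/kℤ \ {i}` is a line with one point removed, so we tile by punctured lines.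
Write `P(A)` for the coordinate subcube `(ℤ/kℤ)^A` without its origin and its corners
`-e_t`, `t ∈ A`. A set that avoids `0` and is described by supports alone is tiled by the
lines in the direction of the last nonzero coordinate, punctured at `0`. Hence `P` is
additive: `P(A₁ ⊔ A₂) = P(A₁) ⊔ P(A₂) ⊔ {z nonzero on both A₁ and A₂}`. For `j ∈ J`, the
complement of the corners of `J` is `P(J \ {j})`, the line through `0` in direction `j`
punctured at `-e_j`, and a set of points described by supports. It remains to tile `P(A)` for
`|A| = k - 1`; there we pair the `k - 2` heights `a ∉ {0, -1}` along a direction `h ∈ A` with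
the `k - 2` other directions of `A`.
-/

def IsCopy {G : Type*} [AddCommGroup G] {d : ℕ} (T : Set G)
    (S : Set (Fin d → G)) : Prop :=
  ∃ (j : Fin d) (y : Fin d → G),
    S = {z | ∃ t ∈ T, z = Function.update y j (y j + t)}

def Tilable {G : Type*} [AddCommGroup G] {d : ℕ} (T : Set G)
    (X : Set (Fin d → G)) : Prop :=
  ∃ P : Set (Set (Fin d → G)),
    (∀ S ∈ P, IsCopy T S) ∧ P.PairwiseDisjoint id ∧ ⋃₀ P = X

/-- The `j`-th corner of `(ℤ/kℤ)^d`: `k-1` in coordinate `j`, `0` elsewhere. -/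
def corner (k d : ℕ) (j : Fin d) : Fin d → ZMod k :=
  Function.update (0 : Fin d → ZMod k) j ((k - 1 : ℕ) : ZMod k)

open Function

section Lines

variable {G : Type*} {d : ℕ}

def puncturedLine (j : Fin d) (y : Fin d → G) (w : G) : Set (Fin d → G) :=
  {z | (∀ l, l ≠ j → z l = y l) ∧ z j ≠ w}

theorem puncturedLine_eq_of_mem {j : Fin d} {y x : Fin d → G} {w : G}
    (hx : x ∈ puncturedLine j y w) : puncturedLine j x w = puncturedLine j y w := by
  ext z
  refine and_congr_left fun _ => forall₂_congr fun l hl => ?_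
  rw [hx.1 l hl]

theorem eq_update_of_mem_puncturedLine {j : Fin d} {y x : Fin d → G} {w : G}
    (hx : x ∈ puncturedLine j y w) : x = update y j (x j) := by
  ext l
  by_cases hl : l = j
  · subst hl; simp
  · rw [update_of_ne hl, hx.1 l hl]

theorem support_update_subset [Zero G] (z : Fin d → G) (j : Fin d) (v : G) :
    support (update z j v) ⊆ insert j (support z) := by
  intro l hl
  by_cases h : l = j
  · exact Or.inl h
  · exact Or.inr (by rwa [mem_support, update_of_ne h] at hl)

theorem eq_single_of_forall_ne [Zero G] {j : Fin d} {z : Fin d → G}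
    (hz : ∀ l, l ≠ j → z l = 0) : z = Pi.single j (z j) := by
  ext l
  by_cases hl : l = j
  · subst hl; simp
  · rw [Pi.single_eq_of_ne hl, hz l hl]

theorem eq_of_single_apply_ne_zero [Zero G] {t l : Fin d} {x : G}
    (h : (Pi.single t x : Fin d → G) l ≠ 0) : l = t := by
  by_contra hl
  exact h (Pi.single_eq_of_ne hl _)

variable [AddCommGroup G]

theorem isCopy_puncturedLine (c : G) (j : Fin d) (y : Fin d → G) (w : G) :
    IsCopy {t | t ≠ c} (puncturedLine j y w) := by
  refine ⟨j, update y j (w - c), Set.ext fun z => ⟨fun hz => ?_, ?_⟩⟩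
  · refine ⟨z j - (w - c), fun h => hz.2 ?_, ?_⟩
    · calc z j = z j - (w - c) + (w - c) := (sub_add_cancel _ _).symm
        _ = w := by rw [h]; abel
    · rw [update_self, add_sub_cancel, update_idem]
      exact eq_update_of_mem_puncturedLine hz
  · rintro ⟨t, ht, rfl⟩
    refine ⟨fun l hl => by rw [update_of_ne hl, update_of_ne hl], fun h => ht ?_⟩
    rw [update_self, update_self] at h
    calc t = w - c + t - (w - c) := by abel
      _ = c := by rw [h]; abel

namespace Tilable

variable {T : Set G}

theorem empty : Tilable T (∅ : Set (Fin d → G)) :=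
  ⟨∅, by simp, Set.pairwiseDisjoint_empty, Set.sUnion_empty⟩

theorem iUnion {ι : Type*} {X : ι → Set (Fin d → G)} (hX : ∀ a, Tilable T (X a))
    (hdisj : Pairwise (Disjoint on X)) : Tilable T (⋃ a, X a) := by
  choose P hcopy hdisjP hcover using hX
  have hsub : ∀ a, ∀ S ∈ P a, S ⊆ X a := fun a S hS =>
    hcover a ▸ Set.subset_sUnion_of_mem hS
  refine ⟨⋃ a, P a, ?_, ?_, by rw [Set.sUnion_iUnion]; exact Set.iUnion_congr hcover⟩
  · simp only [Set.mem_iUnion]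
    rintro S ⟨a, hS⟩
    exact hcopy a S hS
  · simp only [Set.PairwiseDisjoint, Set.Pairwise, Set.mem_iUnion]
    rintro S ⟨a, hS⟩ S' ⟨a', hS'⟩ hne
    obtain rfl | ha := eq_or_ne a a'
    · exact hdisjP a hS hS' hne
    · exact (hdisj ha).mono (hsub a S hS) (hsub a' S' hS')

theorem union {X Y : Set (Fin d → G)} (hX : Tilable T X) (hY : Tilable T Y)
    (hXY : Disjoint X Y) : Tilable T (X ∪ Y) := by
  rw [Set.union_eq_iUnion]
  exact iUnion (fun b => by cases b <;> assumption) (pairwise_disjoint_on_bool.2 hXY)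

end Tilable

theorem tilable_puncturedLine (c : G) (j : Fin d) (y : Fin d → G) (w : G) :
    Tilable {t | t ≠ c} (puncturedLine j y w) :=
  ⟨{puncturedLine j y w}, by simpa using isCopy_puncturedLine c j y w,
    Set.pairwiseDisjoint_singleton _ _, Set.sUnion_singleton _⟩

theorem tilable_of_lines {c : G} {Y : Set (Fin d → G)} (j : Fin d) (w : (Fin d → G) → G)
    (hw : ∀ z v, w (update z j v) = w z)
    (hY : ∀ z ∈ Y, z j ≠ w z ∧ ∀ v, v ≠ w z → update z j v ∈ Y) :
    Tilable {t | t ≠ c} Y := by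
  have hline : ∀ z, ∀ x ∈ puncturedLine j z (w z),
      puncturedLine j x (w x) = puncturedLine j z (w z) := fun z x hx => by
    rw [eq_update_of_mem_puncturedLine hx, hw, ← eq_update_of_mem_puncturedLine hx,
      puncturedLine_eq_of_mem hx]
  refine ⟨(fun z => puncturedLine j z (w z)) '' Y, ?_, ?_, ?_⟩
  · rintro _ ⟨z, -, rfl⟩
    exact isCopy_puncturedLine c j z (w z)
  · rintro _ ⟨z, -, rfl⟩ _ ⟨z', -, rfl⟩ hne
    refine Set.disjoint_left.2 fun x hx hx' => hne ?_
    exact (hline z x hx).symm.trans (hline z' x hx')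
  · ext x
    simp only [Set.sUnion_image, Set.mem_iUnion, exists_prop]
    constructor
    · rintro ⟨z, hz, hx⟩
      rw [eq_update_of_mem_puncturedLine hx]
      exact (hY z hz).2 _ hx.2
    · exact fun hx => ⟨x, hx, fun _ _ => rfl, (hY x hx).1⟩

theorem tilable_of_support {c : G} {X : Set (Fin d → G)} (h0 : 0 ∉ X)
    (hX : ∀ z z', support z = support z' → z ∈ X → z' ∈ X) :
    Tilable {t | t ≠ c} X := by
  classical
  have hsplit : X = ⋃ j, {z | z ∈ X ∧ z j ≠ 0 ∧ ∀ l, j < l → z l = 0} := by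
    ext z
    simp only [Set.mem_iUnion, Set.mem_ofPred_eq]
    refine ⟨fun hz => ?_, fun ⟨_, hz, _⟩ => hz⟩
    obtain ⟨l, hl⟩ : ∃ l, z l ≠ 0 := by
      by_contra! h
      exact h0 ((funext h : z = 0) ▸ hz)
    have hne : (Finset.univ.filter fun l => z l ≠ 0).Nonempty := ⟨l, by simpa using hl⟩
    obtain ⟨j, hj, hmax⟩ := Finset.exists_max_image _ id hne
    refine ⟨j, hz, (Finset.mem_filter.1 hj).2, fun l hl => ?_⟩
    by_contra h
    exact (hmax l (Finset.mem_filter.2 ⟨Finset.mem_univ l, h⟩)).not_gt hl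
  rw [hsplit]
  refine Tilable.iUnion (fun j => tilable_of_lines j (fun _ => 0) (fun _ _ => rfl) ?_) ?_
  · rintro z ⟨hz, hj, hlast⟩
    refine ⟨hj, fun v hv => ⟨hX z _ ?_ hz, by simpa using hv, fun l hl => ?_⟩⟩
    · rw [support_update_of_ne_zero z j hv, Set.insert_eq_of_mem (mem_support.2 hj)]
    · rw [update_of_ne hl.ne', hlast l hl]
  · intro j j' hne
    refine Set.disjoint_left.2 fun z ⟨_, hj, hl⟩ ⟨_, hj', hl'⟩ => ?_
    rcases hne.lt_or_gt with h | h
    · exact hj' (hl j' h)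
    · exact hj (hl' j h)

theorem tilable_plane_diff_axis_graph {c : G} (h t : Fin d) (ht : t ≠ h) (f : G → G) :
    Tilable {x | x ≠ c}
      {z : Fin d → G | support z ⊆ {h, t} ∧ z t ≠ 0 ∧ z h ≠ f (z t)} := by
  refine tilable_of_lines h (fun z => f (z t)) (fun z v => by rw [update_of_ne ht]) ?_
  rintro z ⟨hsupp, hzt, hzh⟩
  refine ⟨hzh, fun v hv => ⟨(support_update_subset z h v).trans ?_, ?_, ?_⟩⟩
  · exact Set.insert_subset (Set.mem_insert h _) hsupp
  · rwa [update_of_ne ht]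
  · rwa [update_self, update_of_ne ht]

end Lines

section Corners

variable {R : Type*} [Ring R] {d : ℕ} {c : R}

def subcube (A : Finset (Fin d)) : Set (Fin d → R) := {z | support z ⊆ A}

def corners (A : Finset (Fin d)) : Set (Fin d → R) := (fun t => Pi.single t (-1)) '' A

theorem zero_mem_subcube (A : Finset (Fin d)) : (0 : Fin d → R) ∈ subcube A := by
  simp [subcube]

theorem subcube_mono {A B : Finset (Fin d)} (hAB : A ⊆ B) :
    (subcube A : Set (Fin d → R)) ⊆ subcube B :=
  fun _ hz => hz.trans (Finset.coe_subset.2 hAB)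

theorem mem_subcube_erase_iff {A : Finset (Fin d)} {j : Fin d} {z : Fin d → R} :
    z ∈ subcube (A.erase j) ↔ z ∈ subcube A ∧ z j = 0 := by
  simp only [subcube, Set.mem_ofPred_eq, Finset.coe_erase, Set.subset_sdiff,
    Set.disjoint_singleton_right, mem_support, not_not]

theorem eq_zero_of_mem_subcube_of_disjoint {A B : Finset (Fin d)} (hAB : Disjoint A B)
    {z : Fin d → R} (hA : z ∈ subcube A) (hB : z ∈ subcube B) : z = 0 := by
  refine support_eq_empty_iff.1 (Set.subset_empty_iff.1 ?_)
  rw [← Finset.coe_empty, ← Finset.disjoint_iff_inter_eq_empty.1 hAB, Finset.coe_inter]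
  exact Set.subset_inter hA hB

theorem corners_subset_subcube (A : Finset (Fin d)) :
    (corners A : Set (Fin d → R)) ⊆ subcube A := by
  rintro _ ⟨t, ht, rfl⟩
  exact Pi.support_single_subset.trans (Set.singleton_subset_iff.2 ht)

theorem corners_mono {A B : Finset (Fin d)} (hAB : A ⊆ B) :
    (corners A : Set (Fin d → R)) ⊆ corners B :=
  Set.image_mono (Finset.coe_subset.2 hAB)

theorem Tilable.subcube_diff_insert_zero_corners_union {A₁ A₂ : Finset (Fin d)}
    (hA : Disjoint A₁ A₂)
    (h₁ : Tilable {t | t ≠ c} (subcube A₁ \ insert 0 (corners A₁)))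
    (h₂ : Tilable {t | t ≠ c} (subcube A₂ \ insert 0 (corners A₂))) :
    Tilable {t | t ≠ c} (subcube (A₁ ∪ A₂) \ insert 0 (corners (A₁ ∪ A₂))) := by
  have hmixed : Tilable {t | t ≠ c}
      (subcube (A₁ ∪ A₂) \ (subcube A₁ ∪ subcube A₂) : Set (Fin d → R)) :=
    tilable_of_support (fun h => h.2 (Or.inl (zero_mem_subcube _))) fun z z' hzz' hz => by
      simpa only [subcube, Set.mem_sdiff, Set.mem_union, Set.mem_ofPred_eq, hzz'] using hz
  have heq : subcube (A₁ ∪ A₂) \ insert 0 (corners (A₁ ∪ A₂)) =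
      (subcube A₁ \ insert 0 (corners A₁) ∪ subcube A₂ \ insert 0 (corners A₂)) ∪
        (subcube (A₁ ∪ A₂) \ (subcube A₁ ∪ subcube A₂) : Set (Fin d → R)) := by
    ext z
    have h0 : z = 0 → z ∈ subcube A₁ ∧ z ∈ subcube A₂ := by
      rintro rfl; exact ⟨zero_mem_subcube _, zero_mem_subcube _⟩
    have hs₁ : z ∈ subcube A₁ → z ∈ subcube (A₁ ∪ A₂) :=
      (subcube_mono Finset.subset_union_left ·)
    have hs₂ : z ∈ subcube A₂ → z ∈ subcube (A₁ ∪ A₂) :=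
      (subcube_mono Finset.subset_union_right ·)
    have hc₁ : z ∈ corners A₁ → z ∈ subcube A₁ := (corners_subset_subcube A₁ ·)
    have hc₂ : z ∈ corners A₂ → z ∈ subcube A₂ := (corners_subset_subcube A₂ ·)
    have hd : z ∈ subcube A₁ → z ∈ subcube A₂ → z = 0 :=
      eq_zero_of_mem_subcube_of_disjoint hA
    simp only [corners, Finset.coe_union, Set.image_union] at hc₁ hc₂ ⊢
    simp only [Set.mem_sdiff, Set.mem_union, Set.mem_insert_iff]
    tauto
  rw [heq]
  refine (h₁.union h₂ ?_).union hmixed ?_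
  · exact Set.disjoint_left.2 fun z hz₁ hz₂ =>
      hz₁.2 (Or.inl (eq_zero_of_mem_subcube_of_disjoint hA hz₁.1 hz₂.1))
  · exact Set.disjoint_left.2 fun z hz hz' => hz'.2 (hz.imp And.left And.left)

theorem subcube_diff_corners_eq [Nontrivial R] {A : Finset (Fin d)} {j : Fin d} (hj : j ∈ A) :
    (subcube A \ corners A : Set (Fin d → R)) =
      (subcube (A.erase j) \ insert 0 (corners (A.erase j)) ∪ puncturedLine j 0 (-1)) ∪
        {z | support z ⊆ A ∧ j ∈ support z ∧ ¬ support z ⊆ {j}} := by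
  ext z
  constructor
  · rintro ⟨hzA, hzc⟩
    by_cases hzj : z j = 0
    · by_cases h0 : z = 0
      · subst h0
        exact Or.inl (Or.inr ⟨fun _ _ => rfl, (neg_ne_zero.2 one_ne_zero).symm⟩)
      · refine Or.inl (Or.inl ⟨mem_subcube_erase_iff.2 ⟨hzA, hzj⟩, ?_⟩)
        rintro (rfl | hc)
        · exact h0 rfl
        · exact hzc (corners_mono (A.erase_subset j) hc)
    · by_cases hs : ∀ l, l ≠ j → z l = 0
      · refine Or.inl (Or.inr ⟨hs, fun h1 => hzc ⟨j, hj, ?_⟩⟩)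
        rw [eq_single_of_forall_ne hs, h1]
      · refine Or.inr ⟨hzA, mem_support.2 hzj, fun hsub => hs fun l hl => ?_⟩
        exact notMem_support.1 fun hl' => hl (hsub hl')
  · rintro ((⟨hz, hz0⟩ | ⟨hs, hz1⟩) | ⟨hzA, hzj, hs⟩)
    · obtain ⟨hzA, hzj⟩ := mem_subcube_erase_iff.1 hz
      refine ⟨hzA, ?_⟩
      rintro ⟨t, ht, rfl⟩
      have htj : t ≠ j := by rintro rfl; simp at hzj
      exact hz0 (Or.inr ⟨t, Finset.mem_erase.2 ⟨htj, ht⟩, rfl⟩)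
    · refine ⟨support_subset_iff'.2 fun l hl => hs l fun e => hl (e ▸ hj), ?_⟩
      rintro ⟨t, ht, rfl⟩
      obtain rfl : t = j := by
        by_contra htj
        simpa using hs t htj
      simp at hz1
    · refine ⟨hzA, ?_⟩
      rintro ⟨t, ht, rfl⟩
      obtain rfl := eq_of_single_apply_ne_zero (mem_support.1 hzj)
      exact hs Pi.support_single_subset

theorem Tilable.subcube_diff_corners [Nontrivial R] {A : Finset (Fin d)} {j : Fin d} (hj : j ∈ A)
    (h : Tilable {t | t ≠ c} (subcube (A.erase j) \ insert 0 (corners (A.erase j)))) :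
    Tilable {t | t ≠ c} (subcube A \ corners A) := by
  rw [subcube_diff_corners_eq hj]
  refine (h.union (tilable_puncturedLine c j 0 (-1)) ?_).union ?_ ?_
  · refine Set.disjoint_left.2 fun z ⟨hz, hz0⟩ ⟨hs, _⟩ => hz0 (Or.inl ?_)
    rw [eq_single_of_forall_ne hs, (mem_subcube_erase_iff.1 hz).2, Pi.single_zero]
  · exact tilable_of_support (fun h => by simpa using h.2.1) fun z z' hzz' hz => by
      rwa [Set.mem_ofPred_eq, ← hzz']
  · refine Set.disjoint_left.2 fun z hz ⟨_, hzj, hs⟩ => ?_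
    rcases hz with ⟨hz, -⟩ | ⟨hl, -⟩
    · exact hzj (mem_subcube_erase_iff.1 hz).2
    · exact hs (support_subset_iff'.2 fun l hl' => hl l hl')

section Gadget

/-! The line in direction `h` through a point `u • e_t` of the `t`-axis is punctured at height
`0` if `u = -1` (where `-e_t` is missing anyway) and at height `σ⁻¹ t` otherwise. The points at
height `a` left out in this way, together with `a • e_h`, form the line at height `a` in
direction `σ a`, punctured at `-e_{σ a}`. Points with two nonzero coordinates besides `h`
are tiled through their supports. -/

variable {A : Finset (Fin d)} {h : Fin d} (σ : {a : R // a ≠ 0 ∧ a ≠ -1} ≃ A.erase h)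

def offAxes (A : Finset (Fin d)) (h : Fin d) : Set (Fin d → R) :=
  {z | support z ⊆ A ∧ ∀ t, ¬ support z ⊆ {h, t}}

open Classical in
noncomputable def punctureHeight (t : A.erase h) (u : R) : R :=
  if u = -1 then 0 else σ.symm t

def axisLines (t : A.erase h) : Set (Fin d → R) :=
  {z | support z ⊆ {h, (t : Fin d)} ∧ z t ≠ 0 ∧ z h ≠ punctureHeight σ t (z t)}

def levelLine (a : {a : R // a ≠ 0 ∧ a ≠ -1}) : Set (Fin d → R) :=
  puncturedLine (σ a : Fin d) (Pi.single h (a : R)) (-1)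

theorem apply_eq_of_mem_levelLine {a : {a : R // a ≠ 0 ∧ a ≠ -1}} {z : Fin d → R}
    (hz : z ∈ levelLine σ a) : z h = a := by
  rw [hz.1 h (Finset.ne_of_mem_erase (σ a).2).symm, Pi.single_eq_same]

theorem support_subset_of_mem_levelLine {a : {a : R // a ≠ 0 ∧ a ≠ -1}} {z : Fin d → R}
    (hz : z ∈ levelLine σ a) : support z ⊆ {h, (σ a : Fin d)} :=
  support_subset_iff'.2 fun l hl => by
    simp only [Set.mem_insert_iff, Set.mem_singleton_iff, not_or] at hl
    rw [hz.1 l hl.2, Pi.single_eq_of_ne hl.1]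

theorem pairwise_disjoint_axisLines : Pairwise (Disjoint on axisLines σ) := by
  intro t t' htt'
  refine Set.disjoint_left.2 fun z ⟨_, hzt, _⟩ ⟨hsupp', _, _⟩ => htt' (Subtype.ext ?_)
  exact (hsupp' (mem_support.2 hzt)).resolve_left (Finset.ne_of_mem_erase t.2)

theorem pairwise_disjoint_levelLine : Pairwise (Disjoint on levelLine σ) := fun _ _ haa' =>
  Set.disjoint_left.2 fun _ hz hz' =>
    haa' (Subtype.ext
      ((apply_eq_of_mem_levelLine σ hz).symm.trans (apply_eq_of_mem_levelLine σ hz')))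

theorem disjoint_axisLines_levelLine :
    Disjoint (⋃ t, axisLines σ t) (⋃ a, levelLine σ a) := by
  simp only [Set.disjoint_iUnion_left, Set.disjoint_iUnion_right]
  intro a t
  refine Set.disjoint_left.2 fun z ⟨_, hzt, hzh⟩ hz => hzh ?_
  obtain rfl : t = σ a := by
    refine Subtype.ext ?_
    by_contra hne
    exact hzt (by rw [hz.1 t hne, Pi.single_eq_of_ne (Finset.ne_of_mem_erase t.2)])
  simp only [punctureHeight, Equiv.symm_apply_apply, hz.2, if_false,
    apply_eq_of_mem_levelLine σ hz]

theorem disjoint_offAxes :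
    Disjoint (offAxes A h) ((⋃ t, axisLines σ t) ∪ ⋃ a, levelLine σ a) := by
  refine Set.disjoint_left.2 fun z hz hz' => ?_
  simp only [Set.mem_union, Set.mem_iUnion] at hz'
  rcases hz' with ⟨t, hzt⟩ | ⟨a, hza⟩
  · exact hz.2 t hzt.1
  · exact hz.2 _ (support_subset_of_mem_levelLine σ hza)

theorem offAxes_subset :
    (offAxes A h : Set (Fin d → R)) ⊆ subcube A \ insert 0 (corners A) := by
  rintro z ⟨hzA, hO⟩
  refine ⟨hzA, ?_⟩
  rintro (rfl | ⟨s, -, rfl⟩)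
  · exact hO h (by simp)
  · exact hO s (Pi.support_single_subset.trans (by simp))

theorem axisLines_subset (hh : h ∈ A) (t : A.erase h) :
    axisLines σ t ⊆ subcube A \ insert 0 (corners A) := by
  rintro z ⟨hsupp, hzt, hzh⟩
  refine ⟨hsupp.trans ?_, ?_⟩
  · simpa [Set.insert_subset_iff] using ⟨hh, Finset.mem_of_mem_erase t.2⟩
  rintro (rfl | ⟨s, -, rfl⟩)
  · exact hzt rfl
  · obtain rfl := eq_of_single_apply_ne_zero hzt
    simp [punctureHeight, Pi.single_eq_of_ne (Finset.ne_of_mem_erase t.2).symm] at hzh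

theorem levelLine_subset (hh : h ∈ A) (a : {a : R // a ≠ 0 ∧ a ≠ -1}) :
    levelLine σ a ⊆ subcube A \ insert 0 (corners A) := by
  intro z hz
  refine ⟨(support_subset_of_mem_levelLine σ hz).trans ?_, ?_⟩
  · simpa [Set.insert_subset_iff] using ⟨hh, Finset.mem_of_mem_erase (σ a).2⟩
  have hzh := apply_eq_of_mem_levelLine σ hz
  rintro (rfl | ⟨s, -, rfl⟩)
  · exact a.2.1 hzh.symm
  · obtain rfl := eq_of_single_apply_ne_zero (hzh ▸ a.2.1 : _ ≠ (0 : R))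
    exact a.2.2 (by simpa using hzh.symm)

theorem mem_axisLines_or_levelLine {t : Fin d} (ht : t ∈ A.erase h) {z : Fin d → R}
    (hsupp : support z ⊆ {h, t}) (hzt : z t ≠ 0) (hzc : z ≠ Pi.single t (-1)) :
    z ∈ axisLines σ ⟨t, ht⟩ ∨ z ∈ levelLine σ (σ.symm ⟨t, ht⟩) := by
  by_cases hzh : z h = punctureHeight σ ⟨t, ht⟩ (z t)
  · have hoff : ∀ l, l ≠ h → l ≠ t → z l = 0 := fun l h1 h2 =>
      notMem_support.1 fun hl => (hsupp hl).elim h1 h2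
    rw [punctureHeight] at hzh
    split_ifs at hzh with h1
    · refine absurd ?_ hzc
      have hzs : z = Pi.single t (z t) := eq_single_of_forall_ne fun l hl => by
        by_cases hlh : l = h
        · rw [hlh, hzh]
        · exact hoff l hlh hl
      rw [hzs, h1]
    · refine Or.inr ?_
      change z ∈ puncturedLine _ _ _
      rw [Equiv.apply_symm_apply]
      refine ⟨fun l hl => ?_, h1⟩
      by_cases hlh : l = h
      · rw [hlh, Pi.single_eq_same, hzh]
      · rw [hoff l hlh hl, Pi.single_eq_of_ne hlh]
  · exact Or.inl ⟨hsupp, hzt, hzh⟩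

theorem mem_levelLine_of_forall_ne [Nontrivial R] {z : Fin d → R}
    (hs : ∀ l, l ≠ h → z l = 0) (ha : z h ≠ 0 ∧ z h ≠ -1) : z ∈ levelLine σ ⟨z h, ha⟩ := by
  refine ⟨fun l _ => congrFun (eq_single_of_forall_ne hs) l, ?_⟩
  rw [hs _ (Finset.ne_of_mem_erase (σ _).2)]
  exact (neg_ne_zero.2 one_ne_zero).symm

theorem subset_offAxes_union [Nontrivial R] (hh : h ∈ A) :
    subcube A \ insert 0 (corners A) ⊆
      offAxes A h ∪ ((⋃ t, axisLines σ t) ∪ ⋃ a, levelLine σ a) := by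
  rintro z ⟨hzA, hz⟩
  simp only [Set.mem_union, Set.mem_iUnion]
  have hc : ∀ t ∈ A, z ≠ Pi.single t (-1) := fun t ht e => hz (Or.inr ⟨t, ht, e.symm⟩)
  by_cases hO : ∀ t, ¬ support z ⊆ {h, t}
  · exact Or.inl ⟨hzA, hO⟩
  obtain ⟨t, ht⟩ := not_forall_not.1 hO
  by_cases hzt : t ≠ h ∧ z t ≠ 0
  · have htA : t ∈ A.erase h := Finset.mem_erase.2 ⟨hzt.1, hzA (mem_support.2 hzt.2)⟩
    exact Or.inr ((mem_axisLines_or_levelLine σ htA ht hzt.2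
      (hc t (Finset.mem_of_mem_erase htA))).imp (⟨_, ·⟩) (⟨_, ·⟩))
  · have hs : ∀ l, l ≠ h → z l = 0 := fun l hl => notMem_support.1 fun hl' => by
      rcases ht hl' with e | rfl
      · exact hl e
      · exact hzt ⟨hl, mem_support.1 hl'⟩
    have hzs := eq_single_of_forall_ne hs
    have ha : z h ≠ 0 ∧ z h ≠ -1 :=
      ⟨fun e => hz (Or.inl (by rw [hzs, e, Pi.single_zero])), fun e => hc h hh (by rw [hzs, e])⟩
    exact Or.inr (Or.inr ⟨_, mem_levelLine_of_forall_ne σ hs ha⟩)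

end Gadget

theorem tilable_subcube_diff_insert_zero_corners_of_equiv [Nontrivial R]
    {A : Finset (Fin d)} {h : Fin d} (hh : h ∈ A) (σ : {a : R // a ≠ 0 ∧ a ≠ -1} ≃ A.erase h) :
    Tilable {t | t ≠ c} (subcube A \ insert 0 (corners A)) := by
  rw [(subset_offAxes_union σ hh).antisymm (Set.union_subset offAxes_subset (Set.union_subset
    (Set.iUnion_subset (axisLines_subset σ hh)) (Set.iUnion_subset (levelLine_subset σ hh))))]
  refine (tilable_of_support ?_ ?_).union ((Tilable.iUnion (fun t => ?_)
    (pairwise_disjoint_axisLines σ)).union (Tilable.iUnion (fun a => tilable_puncturedLine _ _ _ _)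
    (pairwise_disjoint_levelLine σ)) (disjoint_axisLines_levelLine σ)) (disjoint_offAxes σ)
  · exact fun h0 => h0.2 h (by simp)
  · intro z z' hzz' hz
    simpa only [offAxes, Set.mem_ofPred_eq, hzz'] using hz
  · exact tilable_plane_diff_axis_graph h t (Finset.ne_of_mem_erase t.2) _

theorem card_subtype_ne_zero_and_ne_neg_one [Nontrivial R] [Fintype R] [DecidableEq R] :
    Fintype.card {a : R // a ≠ 0 ∧ a ≠ -1} = Fintype.card R - 2 := by
  rw [Fintype.card_subtype, show (Finset.univ.filter fun a : R => a ≠ 0 ∧ a ≠ -1) =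
      Finset.univ \ {0, -1} by ext; simp,
    Finset.card_sdiff_of_subset (Finset.subset_univ _), Finset.card_univ,
    Finset.card_pair (neg_ne_zero.2 one_ne_zero).symm]

theorem tilable_subcube_diff_insert_zero_corners [Nontrivial R] [Fintype R] {A : Finset (Fin d)}
    (hA : Fintype.card R - 1 ∣ A.card) :
    Tilable {t | t ≠ c} (subcube A \ insert 0 (corners A)) := by
  classical
  induction A using Finset.strongInduction with
  | H A ih =>
  rcases A.eq_empty_or_nonempty with rfl | hne
  · convert Tilable.empty
    refine Set.eq_empty_of_forall_notMem fun z ⟨hz, hz0⟩ => hz0 (Or.inl ?_)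
    exact support_eq_empty_iff.1 (Set.subset_empty_iff.1 (by simpa [subcube] using hz))
  have hR := Fintype.one_lt_card (α := R)
  obtain ⟨γ, hγA, hγ⟩ := Finset.exists_subset_card_eq (Nat.le_of_dvd hne.card_pos hA)
  obtain ⟨h, hh⟩ : γ.Nonempty := Finset.card_pos.1 (by omega)
  have σ : {a : R // a ≠ 0 ∧ a ≠ -1} ≃ γ.erase h := Fintype.equivOfCardEq <| by
    rw [card_subtype_ne_zero_and_ne_neg_one, Fintype.card_coe, Finset.card_erase_of_mem hh, hγ]
    omega
  rw [← Finset.union_sdiff_of_subset hγA]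
  refine Tilable.subcube_diff_insert_zero_corners_union Finset.disjoint_sdiff
    (tilable_subcube_diff_insert_zero_corners_of_equiv hh σ)
    (ih _ (Finset.sdiff_ssubset hγA ⟨h, hh⟩) ?_)
  rw [Finset.card_sdiff_of_subset hγA, hγ]
  exact Nat.dvd_sub hA dvd_rfl

theorem tilable_compl_corners [Nontrivial R] [Fintype R] {A : Finset (Fin d)} (hA : A.Nonempty)
    (hdvd : Fintype.card R - 1 ∣ A.card - 1) : Tilable {t | t ≠ c} (corners A)ᶜ := by
  obtain ⟨j, hj⟩ := hA
  have heq : (corners A)ᶜ = (subcube A \ corners A) ∪ (subcube A : Set (Fin d → R))ᶜ := by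
    ext z
    have := @corners_subset_subcube R _ d A z
    simp only [Set.mem_compl_iff, Set.mem_union, Set.mem_sdiff]
    tauto
  rw [heq]
  refine (Tilable.subcube_diff_corners hj (tilable_subcube_diff_insert_zero_corners ?_)).union
    (tilable_of_support (not_not.2 (zero_mem_subcube A)) fun z z' hzz' hz => ?_)
    (disjoint_compl_right.mono_left Set.sdiff_subset)
  · rwa [Finset.card_erase_of_mem hj]
  · simpa only [subcube, Set.mem_compl_iff, Set.mem_ofPred_eq, hzz'] using hz

end Corners

theorem corner_eq_single {k d : ℕ} [NeZero k] (j : Fin d) : corner k d j = Pi.single j (-1) := by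
  rw [corner, Nat.cast_sub NeZero.one_le, ZMod.natCast_self, Nat.cast_one, zero_sub]
  rfl

theorem natCast_image_punctured_Icc {k i : ℕ} [NeZero k] (hi₁ : 1 ≤ i) (hi₂ : i ≤ k) :
    (fun n : ℕ => (n : ZMod k)) '' {n | 1 ≤ n ∧ n ≤ k ∧ n ≠ i} =
      {x | x ≠ (i : ZMod k)} := by
  ext x
  constructor
  · rintro ⟨n, ⟨hn₁, hn₂, hni⟩, rfl⟩ (h : (n : ZMod k) = i)
    rw [ZMod.natCast_eq_natCast_iff'] at h
    rcases hn₂.lt_or_eq with hn | rfl <;> rcases hi₂.lt_or_eq with hi | rfl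
    all_goals simp_all [Nat.mod_eq_of_lt]
    all_goals omega
  · intro hx
    by_cases hx0 : x = 0
    · refine ⟨k, ⟨NeZero.one_le, le_rfl, ?_⟩, by simp [hx0]⟩
      rintro rfl
      exact hx (by simp [hx0])
    · refine ⟨x.val, ⟨Nat.one_le_iff_ne_zero.2 ((ZMod.val_ne_zero x).2 hx0),
        (ZMod.val_lt x).le, ?_⟩, ZMod.natCast_zmod_val x⟩
      rintro h
      exact hx (by rw [← h, ZMod.natCast_zmod_val])

theorem corner_injective {k d : ℕ} [Fact (1 < k)] : Injective (corner k d) := fun a b hab => by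
  refine eq_of_single_apply_ne_zero (t := b) (x := (-1 : ZMod k)) ?_
  rw [← corner_eq_single, ← hab, corner_eq_single, Pi.single_eq_same]
  exact neg_ne_zero.2 one_ne_zero

theorem exists_coe_eq_corners {k d : ℕ} [Fact (1 < k)] {S : Finset (Fin d → ZMod k)}
    (hS : ∀ s ∈ S, ∃ j, s = corner k d j) :
    ∃ J : Finset (Fin d), (S : Set (Fin d → ZMod k)) = corners J ∧ J.card = S.card := by
  classical
  have hSJ : S = (Finset.univ.filter fun j => corner k d j ∈ S).image (corner k d) := by
    ext z
    simp only [Finset.mem_image, Finset.mem_filter, Finset.mem_univ, true_and]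
    exact ⟨fun hz => (hS z hz).imp fun j hj => ⟨by rwa [← hj], hj.symm⟩,
      fun ⟨j, hj, hjz⟩ => hjz ▸ hj⟩
  refine ⟨_, ?_, hSJ ▸ (Finset.card_image_of_injective _ corner_injective).symm⟩
  conv_lhs => rw [hSJ]
  rw [Finset.coe_image, corners, funext corner_eq_single]

theorem removedCorners_general (k i : ℕ) (hi₁ : 2 ≤ i) (hi₂ : i ≤ k - 1)
    (d : ℕ) (S : Finset (Fin d → ZMod k))
    (hSsub : ∀ s ∈ S, ∃ j : Fin d, s = corner k d j)
    (hmod : S.card % (k - 1) = 1 % (k - 1)) :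
    Tilable ((fun n : ℕ => (n : ZMod k)) '' {n : ℕ | 1 ≤ n ∧ n ≤ k ∧ n ≠ i})
      ({z : Fin d → ZMod k | z ∉ S}) := by
  have : Fact (1 < k) := ⟨by omega⟩
  obtain ⟨J, hSJ, hJS⟩ := exists_coe_eq_corners hSsub
  have hJ : J.card % (k - 1) = 1 := by
    rw [hJS, hmod, Nat.mod_eq_of_lt (by omega : 1 < k - 1)]
  have hdvd : Fintype.card (ZMod k) - 1 ∣ J.card - 1 := by
    rw [ZMod.card]
    simpa only [hJ] using Nat.dvd_sub_mod (n := k - 1) J.card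
  rw [natCast_image_punctured_Icc (by omega) (by omega), show {z | z ∉ S} = (corners J)ᶜ from
    congrArg compl hSJ]
  have hJne : J.Nonempty := Finset.card_pos.1 (Nat.pos_of_ne_zero fun h => by simp [h] at hJ)
  exact tilable_compl_corners hJne hdvd

/-- if `S` is a set of corners of `(ℤ/kℤ)^d` with
`|S| ≡ 1 (mod k-1)` and `|S| ≤ d - log_k d`, then `(ℤ/kℤ)^d \ S` is
tilable by `T = [k] \ {i}`. -/
theorem removedCorners (k i : ℕ) (hk : 3 ≤ k) (hi₁ : 2 ≤ i) (hi₂ : i ≤ k - 1)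
    (d : ℕ) (hd : 1 ≤ d) (S : Finset (Fin d → ZMod k))
    (hSsub : ∀ s ∈ S, ∃ j : Fin d, s = corner k d j)
    (hmod : S.card % (k - 1) = 1 % (k - 1))
    (hsize : (S.card : ℝ) ≤ (d : ℝ) - Real.logb k d) :
    Tilable ((fun n : ℕ => (n : ZMod k)) '' {n : ℕ | 1 ≤ n ∧ n ≤ k ∧ n ≠ i})
      ({z : Fin d → ZMod k | z ∉ S}) :=
  removedCorners_general k i hi₁ hi₂ d S hSsub hmod
end

section
/- Let G be an abelian group and T ⊊ G a finite tile, and fix x ∈ G with T + x ≠ T. Set T' = T + x, C↓ = T' \ T, C↑ = T \ T', and A = T ∪ T'. For integers d ≥ 1 and 1 ≤ i ≤ d, let C_{i,d} = C↓ × ⋯ × C↓ × C↑ × C↓ × ⋯ × C↓ ⊂ A^d (with C↑ in the i-th coordinate), and let C_{0,d} = (C↓)^d. Then for every d ≥ 1 and 0 ≤ i ≤ d, the set A^d \ C_{i,d} can be partitioned into copies of T, where a copy of T is a translate of {0}^{j-1} × T × {0}^{d-j} in G^d (for some coordinate j) that lies inside A^d. -/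
/-- `C_{i,d} ⊆ A^d`: the product with `C↑` in coordinate `i` and `C↓` in all
other coordinates; for `io = none` this is `C_{0,d} = (C↓)^d`. -/
def Cset {G : Type*} (Cdown Cup : Set G) {d : ℕ} (io : Option (Fin d)) :
    Set (Fin d → G) :=
  {z | ∀ j : Fin d, z j ∈ if (some j = io) then Cup else Cdown}

open Set Function

section LexPiece

variable {ι α : Type*} [LinearOrder ι] (A C : ι → Set α)

def lexPiece (j : ι) : Set (ι → α) :=
  {z | z j ∈ A j \ C j ∧ ∀ k ≠ j, z k ∈ if k < j then A k ∩ C k else A k}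

theorem pairwise_disjoint_lexPiece : Pairwise (Disjoint on lexPiece A C) := by
  refine (pairwise_disjoint_on _).2 fun j j' hjj' => disjoint_left.2 fun z hz hz' => hz.1.2 ?_
  have := hz'.2 j hjj'.ne
  rw [if_pos hjj'] at this
  exact this.2

theorem iUnion_lexPiece [WellFoundedLT ι] :
    ⋃ j, lexPiece A C j = univ.pi A \ univ.pi C := by
  ext z
  simp only [mem_iUnion, mem_sdiff, mem_univ_pi, not_forall]
  constructor
  · rintro ⟨j, ⟨hzA, hzC⟩, hz⟩
    refine ⟨fun k => ?_, j, hzC⟩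
    rcases eq_or_ne k j with rfl | hk
    · exact hzA
    · have := hz k hk
      split_ifs at this
      exacts [this.1, this]
  · rintro ⟨hzA, hzC⟩
    obtain ⟨j, hj, hmin⟩ := wellFounded_lt.has_min {k | z k ∉ C k} hzC
    refine ⟨j, ⟨hzA j, hj⟩, fun k _ => ?_⟩
    split_ifs with hkj
    · exact ⟨hzA k, not_not.1 fun hk => hmin k hk hkj⟩
    · exact hzA k

end LexPiece

section Tiling

variable {G : Type*} [AddCommGroup G] {d : ℕ}

theorem Tilable.iUnion_s6 {ι : Type*} {T : Set G} {X : ι → Set (Fin d → G)}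
    (hdisj : Pairwise (Disjoint on X)) (hX : ∀ i, Tilable T (X i)) :
    Tilable T (⋃ i, X i) := by
  choose P hcopy hdisjP hunion using hX
  have hsub : ∀ i, ∀ S ∈ P i, S ⊆ X i := fun i S hS => hunion i ▸ subset_sUnion_of_mem hS
  refine ⟨⋃ i, P i, ?_, ?_, by rw [sUnion_iUnion]; exact iUnion_congr hunion⟩
  · simp only [mem_iUnion]
    rintro S ⟨i, hS⟩
    exact hcopy i S hS
  · simp only [PairwiseDisjoint, Set.Pairwise, mem_iUnion]
    rintro S ⟨i, hS⟩ S' ⟨i', hS'⟩ hne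
    rcases eq_or_ne i i' with rfl | hii'
    · exact hdisjP i hS hS' hne
    · exact (hdisj hii').mono (hsub i S hS) (hsub i' S' hS')

def lineCopy (T : Set G) (j : Fin d) (y : Fin d → G) : Set (Fin d → G) :=
  {z | ∃ t ∈ T, z = update y j (y j + t)}

theorem mem_lineCopy {T : Set G} {j : Fin d} {y z : Fin d → G} :
    z ∈ lineCopy T j y ↔ z j - y j ∈ T ∧ ∀ k ≠ j, z k = y k := by
  constructor
  · rintro ⟨t, ht, rfl⟩
    exact ⟨by simpa using ht, fun k hk => update_of_ne hk _ _⟩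
  · rintro ⟨hT, hz⟩
    refine ⟨z j - y j, hT, funext fun k => ?_⟩
    rcases eq_or_ne k j with rfl | hk
    · simp
    · rw [update_of_ne hk, hz k hk]

theorem tilable_setOf_translate_and_forall_ne (T : Set G) (j : Fin d) (s : G)
    (B : Fin d → Set G) :
    Tilable T {z | z j ∈ (fun t => t + s) '' T ∧ ∀ k ≠ j, z k ∈ B k} := by
  set Y : Set (Fin d → G) := {y | y j = s ∧ ∀ k ≠ j, y k ∈ B k}
  have hinj : ∀ y ∈ Y, ∀ y' ∈ Y, ∀ z ∈ lineCopy T j y, z ∈ lineCopy T j y' → y = y' := by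
    rintro y ⟨hy, -⟩ y' ⟨hy', -⟩ z hz hz'
    rw [mem_lineCopy] at hz hz'
    funext k
    rcases eq_or_ne k j with rfl | hk
    · rw [hy, hy']
    · rw [← hz.2 k hk, hz'.2 k hk]
  refine ⟨lineCopy T j '' Y, ?_, ?_, ?_⟩
  · rintro S ⟨y, -, rfl⟩
    exact ⟨j, y, rfl⟩
  · rintro S ⟨y, hy, rfl⟩ S' ⟨y', hy', rfl⟩ hne
    exact disjoint_left.2 fun z hz hz' => hne (congrArg _ (hinj y hy y' hy' z hz hz'))
  · ext z
    simp only [sUnion_image, mem_iUnion, mem_lineCopy, mem_ofPred_eq, mem_image, Y]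
    constructor
    · rintro ⟨y, ⟨rfl, hyB⟩, hT, hz⟩
      exact ⟨⟨_, hT, sub_add_cancel _ _⟩, fun k hk => hz k hk ▸ hyB k hk⟩
    · rintro ⟨⟨t, ht, htz⟩, hzB⟩
      refine ⟨update z j s, ⟨by simp, fun k hk => ?_⟩, by simp [← htz, ht],
        fun k hk => (update_of_ne hk _ _).symm⟩
      rw [update_of_ne hk]
      exact hzB k hk

theorem tilable_univ_pi_diff_univ_pi (T : Set G) (A C : Fin d → Set G) (s : Fin d → G)
    (h : ∀ j, A j \ C j = (fun t => t + s j) '' T) :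
    Tilable T (univ.pi A \ univ.pi C) := by
  rw [← iUnion_lexPiece]
  refine Tilable.iUnion_s6 (pairwise_disjoint_lexPiece A C) fun j => ?_
  rw [lexPiece, h j]
  exact tilable_setOf_translate_and_forall_ne T j (s j) _

end Tiling

theorem removedCset_general {G : Type*} [AddCommGroup G] (T : Set G)
    (x : G)
    (d : ℕ) (io : Option (Fin d)) :
    Tilable T
      ({z : Fin d → G | ∀ j, z j ∈ (T ∪ (fun t => t + x) '' T)} \
        Cset (((fun t => t + x) '' T) \ T) (T \ ((fun t => t + x) '' T)) io) := by
  set T' := (fun t => t + x) '' T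
  have hA : {z : Fin d → G | ∀ j, z j ∈ T ∪ T'} = univ.pi fun _ => T ∪ T' := by
    ext; simp
  have hC : Cset (T' \ T) (T \ T') io =
      univ.pi fun j => if some j = io then T \ T' else T' \ T := by
    ext; simp [Cset]
  rw [hA, hC]
  refine tilable_univ_pi_diff_univ_pi T _ _ (fun j => if some j = io then x else 0) fun j => ?_
  split_ifs
  · change _ = T'
    ext; simp only [mem_sdiff, mem_union]; tauto
  · ext; simp only [mem_sdiff, mem_union, add_zero, image_id']; tauto

/-- with `T' = T + x ≠ T`, `C↓ = T' \ T`, `C↑ = T \ T'`,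
`A = T ∪ T'`, the set `A^d \ C_{i,d}` is `T`-tilable for all `0 ≤ i ≤ d`. -/
theorem removedCset {G : Type*} [AddCommGroup G] (T : Set G)
    (hTfin : T.Finite) (hTne : T.Nonempty) (hTprop : T ≠ Set.univ)
    (x : G) (hx : (fun t => t + x) '' T ≠ T)
    (d : ℕ) (hd : 1 ≤ d) (io : Option (Fin d)) :
    Tilable T
      ({z : Fin d → G | ∀ j, z j ∈ (T ∪ (fun t => t + x) '' T)} \
        Cset (((fun t => t + x) '' T) \ T) (T \ ((fun t => t + x) '' T)) io) :=
  removedCset_general T x d io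
end

section
/- For every d ≥ 1 there exists a one-dimensional tile T ⊂ ℤ that does not tile ℤ^d. Specifically, for k sufficiently large (depending on d), the tile T_k consisting of two intervals of length k at distance k² - 1 apart, with only every k-th point present between them (i.e. T_k = {1,...,k} ∪ {k + jk : 1 ≤ j ≤ k-1} ∪ {k² + k, ..., k² + 2k - 1}), does not tile ℤ^d by copies placed along coordinate directions. -/
/-- The one-dimensional tile consisting of two intervals of length `k` at
distance `k² - 1` apart, with only every `k`-th point present in between:
`{1,…,k} ∪ {k + jk : 1 ≤ j ≤ k-1} ∪ {k²+k, …, k²+2k-1}`. -/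
def sparseTile (k : ℕ) : Set ℤ :=
  {m : ℤ | (1 ≤ m ∧ m ≤ (k : ℤ)) ∨
    (∃ j : ℤ, 1 ≤ j ∧ j ≤ (k : ℤ) - 1 ∧ m = (k : ℤ) + j * k) ∨
    ((k : ℤ) ^ 2 + k ≤ m ∧ m ≤ (k : ℤ) ^ 2 + 2 * k - 1)}

/-!
A copy of `T = sparseTile k` has at most `3k` points but spans an interval of length
`L = k² + 2k - 1`, and every `0 < s < L` is a difference of two elements of `T`. Hence two
disjoint copies in the same direction on the same line have base points at least `L` apart, so
a segment of length `L` on an axis-parallel line meets at most two copies in its own direction.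
Counting the points of the box `[0, L)^d` along lines gives `L ≤ 2d · |T| ≤ 6dk`, which fails
for large `k`.
-/

open Function Pointwise

section AxisCopies

variable {G : Type*} [AddCommGroup G] {d : ℕ}

/-- `IsCopy T S` unfolds to `∃ p, S = axisCopy T p`. -/
def axisCopy (T : Set G) (p : Fin d × (Fin d → G)) : Set (Fin d → G) :=
  {z | ∃ t ∈ T, z = update p.2 p.1 (p.2 p.1 + t)}

theorem mem_axisCopy {T : Set G} {p : Fin d × (Fin d → G)} {z : Fin d → G} :
    z ∈ axisCopy T p ↔ (∀ i ≠ p.1, z i = p.2 i) ∧ z p.1 - p.2 p.1 ∈ T := by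
  constructor
  · rintro ⟨t, ht, rfl⟩
    exact ⟨fun i hi => update_of_ne hi _ _, by simpa using ht⟩
  · rintro ⟨hoff, hdir⟩
    refine ⟨_, hdir, funext fun i => ?_⟩
    rcases eq_or_ne i p.1 with rfl | hi
    · simp
    · simp [hi, hoff i hi]

theorem not_disjoint_axisCopy {T : Set G} {p q : Fin d × (Fin d → G)} (hdir : p.1 = q.1)
    (hoff : ∀ i ≠ p.1, p.2 i = q.2 i) (hsub : q.2 p.1 - p.2 p.1 ∈ T - T) :
    ¬ Disjoint (axisCopy T p) (axisCopy T q) := by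
  obtain ⟨t, ht, t', ht', hs : t - t' = _⟩ := hsub
  refine Set.not_disjoint_iff.2 ⟨_, ⟨t, ht, rfl⟩, mem_axisCopy.2 ⟨fun i hi => ?_, ?_⟩⟩
  · rw [update_of_ne (hdir ▸ hi), hoff i (hdir ▸ hi)]
  · rw [← hdir, update_self]
    convert ht' using 1
    rw [← sub_eq_zero, ← sub_eq_zero.2 hs]
    abel

structure AxisTiling (T : Set G) (d : ℕ) where
  tile : (Fin d → G) → Fin d × (Fin d → G)
  mem_tile (z : Fin d → G) : z ∈ axisCopy T (tile z)
  disjoint_tile {z w : Fin d → G} : tile z ≠ tile w →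
    Disjoint (axisCopy T (tile z)) (axisCopy T (tile w))

theorem Tilable.nonempty_axisTiling {T : Set G} (h : Tilable T (Set.univ : Set (Fin d → G))) :
    Nonempty (AxisTiling T d) := by
  obtain ⟨P, hcopy, hdisj, hcover⟩ := h
  choose j y hjy using hcopy
  have hcopy (S) (hS : S ∈ P) : S = axisCopy T (j S hS, y S hS) := hjy S hS
  have hmem (z : Fin d → G) : ∃ S ∈ P, z ∈ S := by simp [← Set.mem_sUnion, hcover]
  choose S hSP hzS using hmem
  refine ⟨⟨fun z => (j _ (hSP z), y _ (hSP z)), fun z => ?_, fun {z w} hne => ?_⟩⟩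
  · rw [← hcopy _ (hSP z)]
    exact hzS z
  · rw [← hcopy _ (hSP z), ← hcopy _ (hSP w)]
    exact hdisj (hSP z) (hSP w) fun h => hne (by congr!)

end AxisCopies

namespace AxisTiling

variable {T : Set ℤ} {d : ℕ} (τ : AxisTiling T d)

theorem tile_eq_of_abs_sub_lt {L : ℤ} (hgap : Set.Icc 1 (L - 1) ⊆ T - T) {z w : Fin d → ℤ}
    (hdir : (τ.tile z).1 = (τ.tile w).1)
    (hoff : ∀ i ≠ (τ.tile z).1, (τ.tile z).2 i = (τ.tile w).2 i)
    (hlt : |(τ.tile z).2 (τ.tile z).1 - (τ.tile w).2 (τ.tile z).1| < L) :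
    τ.tile z = τ.tile w := by
  by_contra hne
  have hdisj := τ.disjoint_tile hne
  set p := τ.tile z
  set q := τ.tile w
  rw [abs_lt] at hlt
  rcases lt_trichotomy (p.2 p.1) (q.2 p.1) with hpq | hpq | hpq
  · exact not_disjoint_axisCopy hdir hoff (hgap ⟨by omega, by omega⟩) hdisj
  · refine hne (Prod.ext hdir (funext fun i => ?_))
    rcases eq_or_ne i p.1 with rfl | hi
    exacts [hpq, hoff i hi]
  · refine not_disjoint_axisCopy hdir.symm (fun i hi => (hoff i (hdir ▸ hi)).symm) ?_ hdisj.symm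
    rw [← hdir]
    exact hgap ⟨by omega, by omega⟩

def code (z : Fin d → ℤ) (s : ℤ) : Fin d × (Fin d → ℤ) × Bool × ℤ :=
  ((τ.tile z).1, update z (τ.tile z).1 s, decide (0 ≤ (τ.tile z).2 (τ.tile z).1),
    z (τ.tile z).1 - (τ.tile z).2 (τ.tile z).1)

/- The base coordinates of the tiles through the box lie in `[-L, L - 2]`, so two of them with
the same sign are less than `L` apart. -/
theorem injOn_code {L : ℤ} (hT : T ⊆ Set.Icc 1 L) (hgap : Set.Icc 1 (L - 1) ⊆ T - T) :
    Set.InjOn (fun x => τ.code x.1 x.2) ((Set.univ.pi fun _ => Set.Ico 0 L) ×ˢ Set.univ) := by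
  rintro ⟨z, s⟩ ⟨hz, -⟩ ⟨w, s'⟩ ⟨hw, -⟩ h
  simp only [code, Prod.mk.injEq, decide_eq_decide] at h
  obtain ⟨hdir, hupd, hsign, hofs⟩ := h
  have hzw (i) (hi : i ≠ (τ.tile z).1) : z i = w i := by
    simpa [update_of_ne hi, update_of_ne (hdir ▸ hi)] using congrFun hupd i
  obtain ⟨hz_off, hz_mem⟩ := mem_axisCopy.1 (τ.mem_tile z)
  obtain ⟨hw_off, hw_mem⟩ := mem_axisCopy.1 (τ.mem_tile w)
  rw [← hdir] at hw_mem hsign hofs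
  have hbase : τ.tile z = τ.tile w := by
    refine τ.tile_eq_of_abs_sub_lt hgap hdir
      (fun i hi => by rw [← hz_off i hi, hzw i hi, hw_off i (hdir ▸ hi)]) ?_
    have hzt := hT hz_mem
    have hwt := hT hw_mem
    have hzj := hz (τ.tile z).1 trivial
    have hwj := hw (τ.tile z).1 trivial
    simp only [Set.mem_Icc, Set.mem_Ico] at hzt hwt hzj hwj
    rw [abs_lt]
    by_cases h0 : 0 ≤ (τ.tile z).2 (τ.tile z).1
    · have := hsign.1 h0
      omega
    · have := mt hsign.2 h0
      omega
  have hzw' : z = w := by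
    funext i
    rcases eq_or_ne i (τ.tile z).1 with rfl | hi
    · have : (τ.tile z).2 (τ.tile z).1 = (τ.tile w).2 (τ.tile z).1 := by rw [hbase]
      omega
    · exact hzw i hi
  subst hzw'
  simpa [← hdir] using congrFun hupd (τ.tile z).1

theorem mapsTo_code (L : ℤ) :
    Set.MapsTo (fun x => τ.code x.1 x.2) ((Set.univ.pi fun _ => Set.Ico 0 L) ×ˢ Set.Ico 0 L)
      (Set.univ ×ˢ (Set.univ.pi fun _ => Set.Ico 0 L) ×ˢ Set.univ ×ˢ T) := by
  rintro ⟨z, s⟩ ⟨hz, hs⟩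
  refine ⟨trivial, fun i _ => ?_, trivial, (mem_axisCopy.1 (τ.mem_tile z)).2⟩
  rcases eq_or_ne i (τ.tile z).1 with rfl | hi
  · simpa [code] using hs
  · simpa [code, update_of_ne hi] using hz i trivial

end AxisTiling

theorem not_tilable_of_Icc_subset_sub {T : Set ℤ} {d L : ℕ} (hT : T ⊆ Set.Icc 1 (L : ℤ))
    (hgap : Set.Icc 1 ((L : ℤ) - 1) ⊆ T - T) (hL : 2 * d * T.ncard < L) :
    ¬ Tilable T (Set.univ : Set (Fin d → ℤ)) := by
  intro h
  obtain ⟨τ⟩ := h.nonempty_axisTiling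
  have hfin : T.Finite := (Set.finite_Icc _ _).subset hT
  let box := Fintype.piFinset fun _ : Fin d => Finset.Ico (0 : ℤ) L
  have hcount := Finset.card_le_card_of_injOn (fun x => τ.code x.1 x.2)
    (s := box ×ˢ Finset.Ico 0 (L : ℤ))
    (t := Finset.univ ×ˢ box ×ˢ Finset.univ ×ˢ hfin.toFinset)
    (by simpa only [box, Finset.coe_product, Fintype.coe_piFinset, Finset.coe_Ico, Finset.coe_univ,
      Set.Finite.coe_toFinset] using τ.mapsTo_code L)
    (by simpa only [box, Finset.coe_product, Fintype.coe_piFinset, Finset.coe_Ico]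
      using (τ.injOn_code hT hgap).mono (Set.prod_mono le_rfl le_top))
  simp only [Finset.card_product, Fintype.card_piFinset, box, Int.card_Ico, sub_zero,
    Int.toNat_natCast, Finset.prod_const, Finset.card_univ, Fintype.card_fin, Fintype.card_bool,
    ← Set.ncard_eq_toFinset_card T hfin] at hcount
  have hcount' : L ^ d * L ≤ L ^ d * (2 * d * T.ncard) := hcount.trans_eq (by ring)
  exact (Nat.le_of_mul_le_mul_left hcount' (pow_pos (by omega) d)).not_gt hL

theorem sparseTile_subset_Icc (k : ℕ) :
    sparseTile k ⊆ Set.Icc 1 ((k : ℤ) ^ 2 + 2 * k - 1) := by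
  rintro m (⟨h1, h2⟩ | ⟨j, hj1, hj2, rfl⟩ | ⟨h1, h2⟩) <;> constructor <;> nlinarith

theorem exists_add_mem_sparseTile {k : ℕ} {s : ℤ} (hs1 : 1 ≤ s)
    (hs2 : s ≤ (k : ℤ) ^ 2 + 2 * k - 2) :
    ∃ t ∈ Set.Icc 1 (k : ℤ), s + t ∈ sparseTile k := by
  have hk : (1 : ℤ) ≤ k := by nlinarith
  rcases lt_or_ge s k with h1 | h1
  · exact ⟨k - s, ⟨by omega, by omega⟩, Or.inl ⟨by omega, by omega⟩⟩
  rcases lt_or_ge s ((k : ℤ) ^ 2) with h2 | h2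
  · -- `s + t` is the next multiple of `k`
    have hmod := Int.emod_nonneg s (by omega : (k : ℤ) ≠ 0)
    have hmod' := Int.emod_lt_of_pos s (by omega : (0 : ℤ) < k)
    have hdiv := Int.mul_ediv_add_emod s k
    refine ⟨k - s % k, ⟨by omega, by omega⟩,
      Or.inr (Or.inl ⟨s / k, ?_, ?_, by linarith⟩)⟩ <;> nlinarith
  rcases lt_or_ge s ((k : ℤ) ^ 2 + k) with h3 | h3
  · exact ⟨k ^ 2 + k - s, ⟨by omega, by omega⟩, Or.inr (Or.inr ⟨by omega, by omega⟩)⟩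
  · exact ⟨1, ⟨le_rfl, hk⟩, Or.inr (Or.inr ⟨by omega, by omega⟩)⟩

theorem Icc_subset_sparseTile_sub (k : ℕ) :
    Set.Icc 1 ((k : ℤ) ^ 2 + 2 * k - 2) ⊆ sparseTile k - sparseTile k := by
  rintro s ⟨hs1, hs2⟩
  obtain ⟨t, ⟨ht1, ht2⟩, hst⟩ := exists_add_mem_sparseTile hs1 hs2
  exact ⟨s + t, hst, t, Or.inl ⟨ht1, ht2⟩, add_sub_cancel_right s t⟩

theorem ncard_sparseTile_le (k : ℕ) : (sparseTile k).ncard ≤ 3 * k := by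
  let cover : Finset ℤ := Finset.Icc 1 (k : ℤ) ∪
    (Finset.Icc 1 ((k : ℤ) - 1)).image (fun j => k + j * k) ∪
    Finset.Icc ((k : ℤ) ^ 2 + k) ((k : ℤ) ^ 2 + 2 * k - 1)
  have hsub : sparseTile k ⊆ cover := by
    rintro m (⟨h1, h2⟩ | ⟨j, hj1, hj2, rfl⟩ | ⟨h1, h2⟩)
    · exact Finset.mem_union_left _ (Finset.mem_union_left _ (Finset.mem_Icc.2 ⟨h1, h2⟩))
    · exact Finset.mem_union_left _
        (Finset.mem_union_right _ (Finset.mem_image_of_mem _ (Finset.mem_Icc.2 ⟨hj1, hj2⟩)))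
    · exact Finset.mem_union_right _ (Finset.mem_Icc.2 ⟨h1, h2⟩)
  calc (sparseTile k).ncard ≤ cover.card := by
        simpa using Set.ncard_le_ncard hsub (Finset.finite_toSet cover)
    _ ≤ (Finset.Icc 1 (k : ℤ)).card + (Finset.Icc 1 ((k : ℤ) - 1)).card +
        (Finset.Icc ((k : ℤ) ^ 2 + k) ((k : ℤ) ^ 2 + 2 * k - 1)).card :=
      (Finset.card_union_le _ _).trans <| Nat.add_le_add_right
        ((Finset.card_union_le _ _).trans (Nat.add_le_add_left Finset.card_image_le _)) _
    _ ≤ 3 * k := by simp only [Int.card_Icc]; omega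

theorem sparseTile_does_not_tile_general (d : ℕ) :
    ∃ K : ℕ, ∀ k : ℕ, K ≤ k →
      ¬ Tilable (sparseTile k) (Set.univ : Set (Fin d → ℤ)) := by
  refine ⟨6 * d + 1, fun k hk => ?_⟩
  have hL : ((k ^ 2 + 2 * k - 1 : ℕ) : ℤ) = (k : ℤ) ^ 2 + 2 * k - 1 := by
    have : 1 ≤ k ^ 2 + 2 * k := by nlinarith
    push_cast [this]
    ring
  refine not_tilable_of_Icc_subset_sub (L := k ^ 2 + 2 * k - 1) ?_ ?_ ?_
  · exact hL ▸ sparseTile_subset_Icc k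
  · convert Icc_subset_sparseTile_sub k using 2
    rw [hL]
    ring
  · have hk2 : (6 * d + 1) * k ≤ k ^ 2 := by rw [sq]; exact Nat.mul_le_mul_right k hk
    calc 2 * d * (sparseTile k).ncard ≤ 2 * d * (3 * k) := by gcongr; exact ncard_sparseTile_le k
      _ < k ^ 2 + 2 * k - 1 := by lia

/-- for every `d ≥ 1` there is a one-dimensional tile not
tiling `ℤ^d`; namely `sparseTile k` does not tile `ℤ^d` (by copies along
coordinate directions) once `k` is sufficiently large. -/
theorem sparseTile_does_not_tile (d : ℕ) (hd : 1 ≤ d) :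
    ∃ K : ℕ, ∀ k : ℕ, K ≤ k →
      ¬ Tilable (sparseTile k) (Set.univ : Set (Fin d → ℤ)) :=
  sparseTile_does_not_tile_general d
end
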